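/- arXiv:1302.3987 — 4 statements merged into one kernel-verified Lean document; each statement's English description precedes it below -/
import Mathlib

section
/- Let D' = A'⊕B'⊕C' be the trivial double vector bundle with core C', and let A ⊂ A', B ⊂ B', C ⊂ C' be vector subbundles. Then the double vector subbundles of D' having side bundles A and B and core C are in one-to-one correspondence with sections of the bundle A*⊗B*⊗(C'/C); under this correspondence the trivial subbundle A⊕B⊕C corresponds to the zero section. (Equivalently, Dec(D') ≅ Γ(A'*⊗B'*⊗C') and the quotient Γ(A'*⊗B'*⊗C')/Γ_{A,B,C} is isomorphic to Γ(A*⊗B*⊗(C'/C)).) -/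
/-!
A double vector subbundle `D` with sides `A`, `B` and core `C` meets each fibre over `(a, b)` in a
coset of `C`: two points over `(a, b)` differ, after subtracting along both additions, by a core
element. Sending `(a, b)` to this coset is bilinear by the two additivity axioms, and `D` is
recovered from it as the set of `(a, b, c)` with `c` in the coset.
-/

variable {K : Type*} [Field K]
variable {A' B' C' : Type*}
variable [AddCommGroup A'] [Module K A'] [AddCommGroup B'] [Module K B']
variable [AddCommGroup C'] [Module K C']

/-- `D` is a double vector subbundle of the trivial double vector bundle
`(A' ⊕ B' ⊕ C'; A', B'; M)` with side bundles `A ⊆ A'`, `B ⊆ B'` and core `C ⊆ C'`. -/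
def IsDVSub (A : Submodule K A') (B : Submodule K B') (C : Submodule K C')
    (D : Set (A' × B' × C')) : Prop :=
  (∀ d ∈ D, d.1 ∈ A ∧ d.2.1 ∈ B) ∧
  (∀ a ∈ A, ∀ b ∈ B, ∃ c, (a, b, c) ∈ D) ∧
  (∀ a b c b' c', (a, b, c) ∈ D → (a, b', c') ∈ D → (a, b + b', c + c') ∈ D) ∧
  (∀ a b c a' c', (a, b, c) ∈ D → (a', b, c') ∈ D → (a + a', b, c + c') ∈ D) ∧
  (∀ (t : K) a b c, (a, b, c) ∈ D → (a, t • b, t • c) ∈ D) ∧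
  (∀ (t : K) a b c, (a, b, c) ∈ D → (t • a, b, t • c) ∈ D) ∧
  (∀ c, ((0 : A'), (0 : B'), c) ∈ D ↔ c ∈ C)

/-- The trivial double vector subbundle `A ⊕ B ⊕ C` of `A' ⊕ B' ⊕ C'`. -/
def trivialDVSub (A : Submodule K A') (B : Submodule K B') (C : Submodule K C') :
    Set (A' × B' × C') :=
  {d | d.1 ∈ A ∧ d.2.1 ∈ B ∧ d.2.2 ∈ C}

namespace IsDVSub

variable {A : Submodule K A'} {B : Submodule K B'} {C : Submodule K C'}
  {D : Set (A' × B' × C')} (hD : IsDVSub A B C D)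
include hD

lemma add_snd_mem {a : A'} {b b' : B'} {c c' : C'} (h : (a, b, c) ∈ D) (h' : (a, b', c') ∈ D) :
    (a, b + b', c + c') ∈ D :=
  hD.2.2.1 a b c b' c' h h'

lemma add_fst_mem {a a' : A'} {b : B'} {c c' : C'} (h : (a, b, c) ∈ D) (h' : (a', b, c') ∈ D) :
    (a + a', b, c + c') ∈ D :=
  hD.2.2.2.1 a b c a' c' h h'

lemma smul_snd_mem (t : K) {a : A'} {b : B'} {c : C'} (h : (a, b, c) ∈ D) :
    (a, t • b, t • c) ∈ D :=
  hD.2.2.2.2.1 t a b c h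

lemma smul_fst_mem (t : K) {a : A'} {b : B'} {c : C'} (h : (a, b, c) ∈ D) :
    (t • a, b, t • c) ∈ D :=
  hD.2.2.2.2.2.1 t a b c h

lemma zero_zero_mem_iff (c : C') : ((0 : A'), (0 : B'), c) ∈ D ↔ c ∈ C :=
  hD.2.2.2.2.2.2 c

lemma fst_zero_zero_mem {a : A'} {b : B'} {c : C'} (h : (a, b, c) ∈ D) :
    (a, (0 : B'), (0 : C')) ∈ D := by
  simpa only [zero_smul] using hD.smul_snd_mem 0 h

lemma sub_mem_core {a : A'} {b : B'} {c c' : C'} (h : (a, b, c) ∈ D) (h' : (a, b, c') ∈ D) :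
    c - c' ∈ C := by
  have h_a0 : (a, (0 : B'), c - c') ∈ D := by
    simpa only [neg_one_smul, ← sub_eq_add_neg, sub_self] using
      hD.add_snd_mem h (hD.smul_snd_mem (-1) h')
  have h_neg_a : (-a, (0 : B'), (0 : C')) ∈ D := by
    simpa only [neg_one_smul, smul_zero] using hD.smul_fst_mem (-1) (hD.fst_zero_zero_mem h)
  rw [← hD.zero_zero_mem_iff]
  simpa only [add_neg_cancel, add_zero] using hD.add_fst_mem h_a0 h_neg_a

lemma mem_of_sub_mem_core {a : A'} {b : B'} {c c' : C'} (h : (a, b, c) ∈ D) (hc : c' - c ∈ C) :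
    (a, b, c') ∈ D := by
  have h_a0 : (a, (0 : B'), c' - c) ∈ D := by
    simpa only [add_zero, zero_add] using
      hD.add_fst_mem (hD.fst_zero_zero_mem h) ((hD.zero_zero_mem_iff _).mpr hc)
  simpa only [add_zero, add_sub_cancel] using hD.add_snd_mem h h_a0

/-- A chosen point of `D` over `(a, b)`; only its class modulo `C` is canonical. -/
noncomputable def coreRep (a : A) (b : B) : C' :=
  (hD.2.1 a a.2 b b.2).choose

lemma coreRep_mem (a : A) (b : B) : ((a : A'), (b : B'), hD.coreRep a b) ∈ D :=
  (hD.2.1 a a.2 b b.2).choose_spec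

lemma mk_coreRep_eq {a : A} {b : B} {c : C'} (h : ((a : A'), (b : B'), c) ∈ D) :
    (Submodule.Quotient.mk (hD.coreRep a b) : C' ⧸ C) = Submodule.Quotient.mk c :=
  (Submodule.Quotient.eq C).mpr (hD.sub_mem_core (hD.coreRep_mem a b) h)

noncomputable def toBilin : A →ₗ[K] B →ₗ[K] C' ⧸ C :=
  LinearMap.mk₂ K (fun a b => Submodule.Quotient.mk (hD.coreRep a b))
    (fun a a' b => by
      rw [hD.mk_coreRep_eq (hD.add_fst_mem (hD.coreRep_mem a b) (hD.coreRep_mem a' b)),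
        Submodule.Quotient.mk_add])
    (fun t a b => by
      rw [hD.mk_coreRep_eq (hD.smul_fst_mem t (hD.coreRep_mem a b)), Submodule.Quotient.mk_smul])
    (fun a b b' => by
      rw [hD.mk_coreRep_eq (hD.add_snd_mem (hD.coreRep_mem a b) (hD.coreRep_mem a b')),
        Submodule.Quotient.mk_add])
    (fun t a b => by
      rw [hD.mk_coreRep_eq (hD.smul_snd_mem t (hD.coreRep_mem a b)), Submodule.Quotient.mk_smul])

lemma toBilin_apply_of_mem {a : A} {b : B} {c : C'} (h : ((a : A'), (b : B'), c) ∈ D) :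
    hD.toBilin a b = Submodule.Quotient.mk c :=
  hD.mk_coreRep_eq h

end IsDVSub

lemma IsDVSub.toBilin_trivialDVSub {A : Submodule K A'} {B : Submodule K B'} {C : Submodule K C'}
    (h : IsDVSub A B C (trivialDVSub A B C)) : h.toBilin = 0 := by
  ext a b
  rw [h.toBilin_apply_of_mem (c := 0) ⟨a.2, b.2, C.zero_mem⟩, Submodule.Quotient.mk_zero]
  rfl

def bilinDVSub (A : Submodule K A') (B : Submodule K B') (C : Submodule K C')
    (Φ : A →ₗ[K] B →ₗ[K] C' ⧸ C) : Set (A' × B' × C') :=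
  {p | ∃ (a : A) (b : B), p.1 = a ∧ p.2.1 = b ∧ Submodule.Quotient.mk p.2.2 = Φ a b}

section bilinDVSub

variable {A : Submodule K A'} {B : Submodule K B'} {C : Submodule K C'}

lemma isDVSub_bilinDVSub (Φ : A →ₗ[K] B →ₗ[K] C' ⧸ C) : IsDVSub A B C (bilinDVSub A B C Φ) := by
  refine ⟨?_, ?_, ?_, ?_, ?_, ?_, ?_⟩
  · rintro ⟨_, _, _⟩ ⟨a, b, rfl, rfl, -⟩
    exact ⟨a.2, b.2⟩
  · intro a ha b hb
    obtain ⟨c, hc⟩ := Submodule.Quotient.mk_surjective C (Φ ⟨a, ha⟩ ⟨b, hb⟩)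
    exact ⟨c, ⟨a, ha⟩, ⟨b, hb⟩, rfl, rfl, hc⟩
  · rintro _ _ c _ c' ⟨a, b, rfl, rfl, h⟩ ⟨a', b', ha, rfl, h'⟩
    obtain rfl : a = a' := Subtype.ext ha
    exact ⟨a, b + b', rfl, rfl, by rw [Submodule.Quotient.mk_add, h, h', map_add]⟩
  · rintro _ _ c _ c' ⟨a, b, rfl, rfl, h⟩ ⟨a', b', rfl, hb, h'⟩
    obtain rfl : b = b' := Subtype.ext hb
    exact ⟨a + a', b, rfl, rfl, by rw [Submodule.Quotient.mk_add, h, h', map_add,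
      LinearMap.add_apply]⟩
  · rintro t _ _ c ⟨a, b, rfl, rfl, h⟩
    exact ⟨a, t • b, rfl, rfl, by rw [Submodule.Quotient.mk_smul, h, map_smul]⟩
  · rintro t _ _ c ⟨a, b, rfl, rfl, h⟩
    exact ⟨t • a, b, rfl, rfl, by rw [Submodule.Quotient.mk_smul, h, map_smul,
      LinearMap.smul_apply]⟩
  · intro c
    rw [← Submodule.Quotient.mk_eq_zero C]
    constructor
    · rintro ⟨a, b, ha, hb, h⟩
      obtain rfl : a = 0 := Subtype.ext ha.symm
      obtain rfl : b = 0 := Subtype.ext hb.symm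
      simpa using h
    · intro hc
      exact ⟨0, 0, rfl, rfl, by simpa using hc⟩

lemma IsDVSub.bilinDVSub_toBilin {D : Set (A' × B' × C')} (hD : IsDVSub A B C D) :
    bilinDVSub A B C hD.toBilin = D := by
  ext ⟨a, b, c⟩
  constructor
  · rintro ⟨a, b, rfl, rfl, h⟩
    exact hD.mem_of_sub_mem_core (hD.coreRep_mem a b) ((Submodule.Quotient.eq C).mp h)
  · intro h
    obtain ⟨ha, hb⟩ := hD.1 _ h
    exact ⟨⟨a, ha⟩, ⟨b, hb⟩, rfl, rfl, (hD.toBilin_apply_of_mem h).symm⟩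

lemma toBilin_isDVSub_bilinDVSub (Φ : A →ₗ[K] B →ₗ[K] C' ⧸ C) :
    (isDVSub_bilinDVSub Φ).toBilin = Φ := by
  ext a b
  obtain ⟨c, hc⟩ := Submodule.Quotient.mk_surjective C (Φ a b)
  rw [(isDVSub_bilinDVSub Φ).toBilin_apply_of_mem ⟨a, b, rfl, rfl, hc⟩, hc]

end bilinDVSub

noncomputable def dvSubEquivBilin (A : Submodule K A') (B : Submodule K B')
    (C : Submodule K C') : {D : Set (A' × B' × C') // IsDVSub A B C D} ≃ (A →ₗ[K] B →ₗ[K] C' ⧸ C)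
    where
  toFun D := D.2.toBilin
  invFun Φ := ⟨bilinDVSub A B C Φ, isDVSub_bilinDVSub Φ⟩
  left_inv D := Subtype.ext D.2.bilinDVSub_toBilin
  right_inv := toBilin_isDVSub_bilinDVSub

theorem dvb_subbundles_of_trivial_biject_with_hom_sections
    (A : Submodule K A') (B : Submodule K B') (C : Submodule K C') :
    ∃ e : {D : Set (A' × B' × C') // IsDVSub A B C D} ≃
          (A →ₗ[K] B →ₗ[K] (C' ⧸ C)),
      (∀ (D : Set (A' × B' × C')) (hD : IsDVSub A B C D)
         (a : A) (b : B) (c' : C'), ((a : A'), (b : B'), c') ∈ D →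
           e ⟨D, hD⟩ a b = Submodule.Quotient.mk c') ∧
      (∀ h : IsDVSub A B C (trivialDVSub A B C), e ⟨trivialDVSub A B C, h⟩ = 0) :=
  ⟨dvSubEquivBilin A B C, fun _ hD _ _ _ h => hD.toBilin_apply_of_mem h,
    fun h => h.toBilin_trivialDVSub⟩
end

section
/- Let D = A⊕B⊕C ⇒ B and D' = A'⊕B'⊕C' ⇒ B' be the VB-algebroids corresponding to 2-term representations up to homotopy (∂_V, ∇^V, K_V) of A on V = C[0]⊕B[1] and (∂_W, ∇^W, K_W) of A' on W = C'[0]⊕B'[1]. Let F: D → D' be the DVB morphism determined by bundle maps F_ver: A→A', F_hor: B→B', F_c: C→C' and Φ ∈ Ω¹(A; Hom(B,C')), i.e. F(a,b,c) = (F_ver(a), F_hor(b), F_c(c)+Φ_a(b)). Then the identity F*∘d_{D'} = d_D∘F* holds on C^∞(B') = Γ(∧⁰D'*_{B'}) if and only if the following hold: ρ_{A'}∘F_ver = ρ_A; F_hor∘∂_V = ∂_W∘F_c; and ∇^{Hom}_a F_hor = ∂_W∘Φ_a for all a ∈ Γ(A), where ∇^{Hom} is the A-connection on Hom(V,W) built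 from ∇^V and the pullback of ∇^W along F_ver. -/
/-!
On a degree-0 function `f ∘ q + ℓ_β`, the difference `F^* d_{D'} - d_D F^*` is a triple
(linear, core and `A^*` part), and each part is tested against the nondegenerate pairings.
The `A^*` part pairs to `(ρ_{A'} (F_ver a) - ρ_A a) f`, the core part to
`⟨β, ∂_W (F_c c) - F_hor (∂_V c)⟩`, and, once the anchors agree, the linear part to
`⟨β, ∂_W (Φ_a b) - ∇^{Hom}_a F_hor (b)⟩`; the anchor terms of the two dual connections
cancel precisely because of the first condition.
-/

/-!
Algebraic (Lie–Rinehart style) model of Lie algebroids and 2-term representations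
up to homotopy.  The commutative ring `R` plays the role of the ring of smooth
functions `C^∞(M)` on the base, modules over `R` play the role of the modules of
sections of vector bundles over `M`, and `Derivation ℤ R R` plays the role of the
module of vector fields `Γ(TM)`.
-/

/-- A Lie algebroid over the base with function ring `R`, with module of sections `A`:
a Lie bracket on `A` together with an anchor map to vector fields (derivations of `R`),
satisfying the Leibniz rule. -/
structure LieAlgebroid (R : Type*) [CommRing R] (A : Type*) [AddCommGroup A] [Module R A] :
    Type _ where
  bracket : A → A → A
  anchor : A →ₗ[R] Derivation ℤ R R
  bracket_add_left : ∀ a b c, bracket (a + b) c = bracket a c + bracket b c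
  bracket_add_right : ∀ a b c, bracket a (b + c) = bracket a b + bracket a c
  bracket_skew : ∀ a b, bracket a b = - bracket b a
  bracket_jacobi : ∀ a b c,
    bracket a (bracket b c) = bracket (bracket a b) c + bracket b (bracket a c)
  bracket_smul : ∀ a (f : R) b, bracket a (f • b) = f • bracket a b + anchor a f • b
  anchor_bracket : ∀ a b, anchor (bracket a b) = ⁅anchor a, anchor b⁆

/-- An `A`-connection on the module (of sections) `V`, for a Lie algebroid `A`. -/
structure Connection (R : Type*) [CommRing R] {A : Type*} [AddCommGroup A] [Module R A]
    (L : LieAlgebroid R A) (V : Type*) [AddCommGroup V] [Module R V] : Type _ where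
  conn : A → V → V
  conn_add_left : ∀ a b v, conn (a + b) v = conn a v + conn b v
  conn_smul_left : ∀ (f : R) a v, conn (f • a) v = f • conn a v
  conn_add_right : ∀ a v w, conn a (v + w) = conn a v + conn a w
  conn_leibniz : ∀ a (f : R) v, conn a (f • v) = f • conn a v + L.anchor a f • v

/-- The curvature of a connection. -/
def Connection.curv {R : Type*} [CommRing R] {A : Type*} [AddCommGroup A] [Module R A]
    {L : LieAlgebroid R A} {V : Type*} [AddCommGroup V] [Module R V]
    (D : Connection R L V) (a b : A) (v : V) : V :=
  D.conn a (D.conn b v) - D.conn b (D.conn a v) - D.conn (L.bracket a b) v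

/-- A 2-term representation up to homotopy of the Lie algebroid `A` on `V₀[0] ⊕ V₁[1]`,
given by its structure operators `(∂, ∇, K)`:  a bundle map `∂ : V₀ → V₁`, a pair of
`A`-connections compatible with `∂`, and a 2-form `K` with values in `Hom(V₁, V₀)` which
is `d_{∇^Hom}`-closed and controls both curvatures. -/
structure TwoTermRUTH (R : Type*) [CommRing R] {A : Type*} [AddCommGroup A] [Module R A]
    (L : LieAlgebroid R A)
    (V0 V1 : Type*) [AddCommGroup V0] [Module R V0] [AddCommGroup V1] [Module R V1] :
    Type _ where
  d : V0 →ₗ[R] V1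
  conn0 : Connection R L V0
  conn1 : Connection R L V1
  d_conn : ∀ a v, d (conn0.conn a v) = conn1.conn a (d v)
  K : A → A → (V1 →ₗ[R] V0)
  K_add_left : ∀ a b c, K (a + b) c = K a c + K b c
  K_smul_left : ∀ (f : R) a b, K (f • a) b = f • K a b
  K_skew : ∀ a b, K a b = - K b a
  curv0 : ∀ a b v, conn0.curv a b v = - K a b (d v)
  curv1 : ∀ a b w, conn1.curv a b w = - d (K a b w)
  dK : ∀ a b c w,
      (conn0.conn a (K b c w) - K b c (conn1.conn a w))
    - (conn0.conn b (K a c w) - K a c (conn1.conn b w))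
    + (conn0.conn c (K a b w) - K a b (conn1.conn c w))
    - K (L.bracket a b) c w + K (L.bracket a c) b w - K (L.bracket b c) a w = 0

/-- A morphism of 2-term representations up to homotopy over a (Lie algebroid) morphism
`T : A → A'` of the underlying Lie algebroids, i.e. a morphism `(A, V) ⇒ (A, T^! W)`:
it is given by components `(φ₀, φ₁, Φ)` satisfying the usual four equations, in which
the structure operators of `W` are pulled back along `T`. -/
structure RUTHHomOver {R : Type*} [CommRing R]
    {A : Type*} [AddCommGroup A] [Module R A] {A' : Type*} [AddCommGroup A'] [Module R A']
    {L : LieAlgebroid R A} {L' : LieAlgebroid R A'}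
    (T : A →ₗ[R] A')
    {V0 V1 : Type*} [AddCommGroup V0] [Module R V0] [AddCommGroup V1] [Module R V1]
    {W0 W1 : Type*} [AddCommGroup W0] [Module R W0] [AddCommGroup W1] [Module R W1]
    (V : TwoTermRUTH R L V0 V1) (W : TwoTermRUTH R L' W0 W1) : Type _ where
  φ0 : V0 →ₗ[R] W0
  φ1 : V1 →ₗ[R] W1
  Φ : A →ₗ[R] (V1 →ₗ[R] W0)
  comm_d : ∀ v, φ1 (V.d v) = W.d (φ0 v)
  comm0 : ∀ a v, W.conn0.conn (T a) (φ0 v) - φ0 (V.conn0.conn a v) = Φ a (V.d v)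
  comm1 : ∀ a w, W.conn1.conn (T a) (φ1 w) - φ1 (V.conn1.conn a w) = W.d (Φ a w)
  commK : ∀ a b w,
      (W.conn0.conn (T a) (Φ b w) - Φ b (V.conn1.conn a w))
    - (W.conn0.conn (T b) (Φ a w) - Φ a (V.conn1.conn b w))
    - Φ (L.bracket a b) w
    = φ0 (V.K a b w) - W.K (T a) (T b) (φ1 w)

/-- A morphism of Lie algebroids over the identity of the base. -/
def IsLieAlgebroidHom {R : Type*} [CommRing R]
    {A : Type*} [AddCommGroup A] [Module R A] {A' : Type*} [AddCommGroup A'] [Module R A']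
    (L : LieAlgebroid R A) (L' : LieAlgebroid R A') (T : A →ₗ[R] A') : Prop :=
  (∀ a, L'.anchor (T a) = L.anchor a) ∧
  (∀ a b, T (L.bracket a b) = L'.bracket (T a) (T b))

/-!
Model of a morphism of decomposed VB-algebroids.

Let `D = A ⊕ B ⊕ C ⇒ B` and `D' = A' ⊕ B' ⊕ C' ⇒ B'` be the VB-algebroids
corresponding to 2-term representations up to homotopy `V` of `A` on `C[0] ⊕ B[1]` and
`W` of `A'` on `C'[0] ⊕ B'[1]`, and let `F : D → D'` be the DVB morphism determined by
bundle maps `F_ver : A → A'`, `F_hor : B → B'`, `F_c : C → C'` and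
`Φ ∈ Ω¹(A; Hom(B, C'))`, i.e. `F(a, b, c) = (F_ver a, F_hor b, F_c c + Φ_a b)`.

* Functions on the total spaces of `B` and `B'` of fiberwise degree ≤ 1 are modelled by
  `R × Bd` and `R × B'd` (`(f, ψ) ↔ f ∘ q_B + ℓ_ψ`), where `Bd, B'd` model `Γ(B^*)`,
  `Γ(B'^*)`; the pullback `F^*` in degree 0 is `(f, β) ↦ (f, F_hor^* β)`.
* Sections of the horizontal duals `D^*_B`, `D'^*_{B'}` are modelled by triples
  `(Q, γ, ψ) ∈ Γ(A^* ⊗ B^*) ⊕ Γ(C^*) ⊕ Γ(A^*)` (linear part + core part); the pullback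
  `F^*` in degree 1 is given by Lemma "dual_morf":
  `F^* ψ̂ = (F_ver^* ψ)^` and `F^*(Q, γ) = (F_ver^* ⊗ F_hor^*(Q) + ⟨Φ, γ⟩, F_c^* γ)`.
* The Lie algebroid differentials `d_D`, `d_{D'}` in degree 0 are given by
  `d_D(f ∘ q_B) = q_A^{D*}(d_A f)` and `d_D(ℓ_ψ) = (d_{∇^*}ψ, ∂^*ψ)`.
-/

section MorphModel

variable {R : Type*} [CommRing R]
variable {A B Cc A' B' Cc' : Type*}
variable [AddCommGroup A] [Module R A] [AddCommGroup B] [Module R B]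
variable [AddCommGroup Cc] [Module R Cc]
variable [AddCommGroup A'] [Module R A'] [AddCommGroup B'] [Module R B']
variable [AddCommGroup Cc'] [Module R Cc']
variable {Bd Cd Ad B'd C'd A'd : Type*}
variable [AddCommGroup Bd] [Module R Bd] [AddCommGroup Cd] [Module R Cd]
variable [AddCommGroup Ad] [Module R Ad]
variable [AddCommGroup B'd] [Module R B'd] [AddCommGroup C'd] [Module R C'd]
variable [AddCommGroup A'd] [Module R A'd]

theorem pullback_dA_eq_iff_anchor_comp (L : LieAlgebroid R A) (L' : LieAlgebroid R A')
    (Fver : A →ₗ[R] A') (pA : Ad →ₗ[R] A →ₗ[R] R) (pA' : A'd →ₗ[R] A' →ₗ[R] R)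
    (sepAd : ∀ ψ χ : Ad, (∀ a, pA ψ a = pA χ a) → ψ = χ)
    (dA0 : R → Ad) (hdA0 : ∀ f a, pA (dA0 f) a = L.anchor a f)
    (dA0' : R → A'd) (hdA0' : ∀ f a', pA' (dA0' f) a' = L'.anchor a' f)
    (Fvd : A'd →ₗ[R] Ad) (hFvd : ∀ ψ a, pA (Fvd ψ) a = pA' ψ (Fver a)) :
    (∀ f, Fvd (dA0' f) = dA0 f) ↔ ∀ a, L'.anchor (Fver a) = L.anchor a := by
  have pairing_eq (f : R) (a : A) :
      pA (Fvd (dA0' f)) a = L'.anchor (Fver a) f := by rw [hFvd, hdA0']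
  refine ⟨fun h a => Derivation.ext fun f => ?_, fun h f => sepAd _ _ fun a => ?_⟩
  · rw [← pairing_eq, h, hdA0]
  · rw [pairing_eq, h, hdA0]

theorem dual_comp_eq_iff_comp_eq (d : Cc →ₗ[R] B) (d' : Cc' →ₗ[R] B')
    (Fhor : B →ₗ[R] B') (Fc : Cc →ₗ[R] Cc')
    (pB : Bd →ₗ[R] B →ₗ[R] R) (pC : Cd →ₗ[R] Cc →ₗ[R] R)
    (pB' : B'd →ₗ[R] B' →ₗ[R] R) (pC' : C'd →ₗ[R] Cc' →ₗ[R] R)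
    (sepCd : ∀ γ δ : Cd, (∀ c, pC γ c = pC δ c) → γ = δ)
    (sepB' : ∀ b₁ b₂ : B', (∀ β, pB' β b₁ = pB' β b₂) → b₁ = b₂)
    (dd : Bd →ₗ[R] Cd) (hdd : ∀ ψ c, pC (dd ψ) c = pB ψ (d c))
    (dd' : B'd →ₗ[R] C'd) (hdd' : ∀ β c', pC' (dd' β) c' = pB' β (d' c'))
    (Fhd : B'd →ₗ[R] Bd) (hFhd : ∀ β b, pB (Fhd β) b = pB' β (Fhor b))
    (Fcd : C'd →ₗ[R] Cd) (hFcd : ∀ γ c, pC (Fcd γ) c = pC' γ (Fc c)) :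
    (∀ β, Fcd (dd' β) = dd (Fhd β)) ↔ ∀ c, Fhor (d c) = d' (Fc c) := by
  have pairing_eq (β : B'd) (c : Cc) :
      pC (Fcd (dd' β)) c = pB' β (d' (Fc c)) ∧ pC (dd (Fhd β)) c = pB' β (Fhor (d c)) :=
    ⟨by rw [hFcd, hdd'], by rw [hdd, hFhd]⟩
  refine ⟨fun h c => sepB' _ _ fun β => ?_, fun h β => sepCd _ _ fun c => ?_⟩
  · rw [← (pairing_eq β c).1, ← (pairing_eq β c).2, h]
  · rw [(pairing_eq β c).1, (pairing_eq β c).2, h]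

theorem pullback_linear_part_eq_iff (L : LieAlgebroid R A) (L' : LieAlgebroid R A')
    (nabla : A → B → B) (nabla' : A' → B' → B') (d' : Cc' →ₗ[R] B')
    (Fver : A →ₗ[R] A') (Fhor : B →ₗ[R] B') (Phi : A →ₗ[R] B →ₗ[R] Cc')
    (pB : Bd →ₗ[R] B →ₗ[R] R) (pB' : B'd →ₗ[R] B' →ₗ[R] R) (pC' : C'd →ₗ[R] Cc' →ₗ[R] R)
    (sepBd : ∀ ψ χ : Bd, (∀ b, pB ψ b = pB χ b) → ψ = χ)
    (sepB' : ∀ b₁ b₂ : B', (∀ β, pB' β b₁ = pB' β b₂) → b₁ = b₂)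
    (c1s : A → Bd → Bd)
    (hc1s : ∀ a ψ b, pB (c1s a ψ) b = L.anchor a (pB ψ b) - pB ψ (nabla a b))
    (c1s' : A' → B'd → B'd)
    (hc1s' : ∀ a' β b', pB' (c1s' a' β) b' = L'.anchor a' (pB' β b') - pB' β (nabla' a' b'))
    (dd' : B'd →ₗ[R] C'd) (hdd' : ∀ β c', pC' (dd' β) c' = pB' β (d' c'))
    (Fhd : B'd →ₗ[R] Bd) (hFhd : ∀ β b, pB (Fhd β) b = pB' β (Fhor b))
    (Phid : C'd → A → Bd) (hPhid : ∀ γ a b, pB (Phid γ a) b = pC' γ (Phi a b))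
    (hanchor : ∀ a, L'.anchor (Fver a) = L.anchor a) :
    (∀ β a, Fhd (c1s' (Fver a) β) + Phid (dd' β) a = c1s a (Fhd β)) ↔
      ∀ a b, nabla' (Fver a) (Fhor b) - Fhor (nabla a b) = d' (Phi a b) := by
  have pairing_sub (β : B'd) (a : A) (b : B) :
      pB (Fhd (c1s' (Fver a) β) + Phid (dd' β) a) b - pB (c1s a (Fhd β)) b
        = pB' β (d' (Phi a b)) - pB' β (nabla' (Fver a) (Fhor b) - Fhor (nabla a b)) := by
    rw [map_add, LinearMap.add_apply, hFhd, hPhid, hdd', hc1s', hc1s, hFhd, hFhd, hanchor,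
      map_sub]
    ring
  refine ⟨fun h a b => sepB' _ _ fun β => ?_, fun h β a => sepBd _ _ fun b => ?_⟩
  · rw [← sub_eq_zero, ← neg_eq_zero, neg_sub, ← pairing_sub, h, sub_self]
  · rw [← sub_eq_zero, pairing_sub, h, sub_self]

theorem Fpull_dD_comm_on_functions_iff_general
    (L : LieAlgebroid R A) (L' : LieAlgebroid R A')
    (V : TwoTermRUTH R L Cc B) (W : TwoTermRUTH R L' Cc' B')
    -- the components of the DVB morphism `F`
    (Fver : A →ₗ[R] A') (Fhor : B →ₗ[R] B') (Fc : Cc →ₗ[R] Cc')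
    (Phi : A →ₗ[R] B →ₗ[R] Cc')
    -- duality pairings (nondegenerate)
    (pB : Bd →ₗ[R] B →ₗ[R] R) (pC : Cd →ₗ[R] Cc →ₗ[R] R) (pA : Ad →ₗ[R] A →ₗ[R] R)
    (pB' : B'd →ₗ[R] B' →ₗ[R] R) (pC' : C'd →ₗ[R] Cc' →ₗ[R] R)
    (pA' : A'd →ₗ[R] A' →ₗ[R] R)
    (sepBd : ∀ ψ χ : Bd, (∀ b, pB ψ b = pB χ b) → ψ = χ)
    (sepCd : ∀ γ δ : Cd, (∀ c, pC γ c = pC δ c) → γ = δ)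
    (sepAd : ∀ ψ χ : Ad, (∀ a, pA ψ a = pA χ a) → ψ = χ)
    (sepB' : ∀ b₁ b₂ : B', (∀ β, pB' β b₁ = pB' β b₂) → b₁ = b₂)
    -- duals of the structure maps
    (c1s : A → Bd → Bd)
    (hc1s : ∀ a ψ b, pB (c1s a ψ) b = L.anchor a (pB ψ b) - pB ψ (V.conn1.conn a b))
    (c1s' : A' → B'd → B'd)
    (hc1s' : ∀ a' β b',
        pB' (c1s' a' β) b' = L'.anchor a' (pB' β b') - pB' β (W.conn1.conn a' b'))
    (Vdd : Bd →ₗ[R] Cd) (hVdd : ∀ ψ c, pC (Vdd ψ) c = pB ψ (V.d c))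
    (Wdd : B'd →ₗ[R] C'd) (hWdd : ∀ β c', pC' (Wdd β) c' = pB' β (W.d c'))
    (dA0 : R → Ad) (hdA0 : ∀ f a, pA (dA0 f) a = L.anchor a f)
    (dA0' : R → A'd) (hdA0' : ∀ f a', pA' (dA0' f) a' = L'.anchor a' f)
    -- duals of the components of `F`
    (Fhd : B'd →ₗ[R] Bd) (hFhd : ∀ β b, pB (Fhd β) b = pB' β (Fhor b))
    (Fcd : C'd →ₗ[R] Cd) (hFcd : ∀ γ c, pC (Fcd γ) c = pC' γ (Fc c))
    (Fvd : A'd →ₗ[R] Ad) (hFvd : ∀ ψ a, pA (Fvd ψ) a = pA' ψ (Fver a))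
    (Phid : C'd → A → Bd) (hPhid : ∀ γ a b, pB (Phid γ a) b = pC' γ (Phi a b))
    -- the Lie algebroid differentials in degree 0, with values the triples
    -- `(Q, γ, ψ) ∈ Γ(A^* ⊗ B^*) ⊕ Γ(C^*) ⊕ Γ(A^*)` of sections of the horizontal dual
    (dD0 : R × Bd → (A → Bd) × Cd × Ad)
    (hdD0 : ∀ f ψ, dD0 (f, ψ) = (fun a => c1s a ψ, Vdd ψ, dA0 f))
    (dD0' : R × B'd → (A' → B'd) × C'd × A'd)
    (hdD0' : ∀ f β, dD0' (f, β) = (fun a' => c1s' a' β, Wdd β, dA0' f)) :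
    -- `F^* ∘ d_{D'} = d_D ∘ F^*` on functions …
    (∀ g : R × B'd,
        (fun a => Fhd ((dD0' g).1 (Fver a)) + Phid (dD0' g).2.1 a,
          Fcd (dD0' g).2.1, Fvd (dD0' g).2.2)
        = dD0 (g.1, Fhd g.2)) ↔
    -- … iff `ρ_{A'} ∘ F_ver = ρ_A`, `F_hor ∘ ∂_V = ∂_W ∘ F_c`, and
    -- `∇^{Hom}_a F_hor = ∂_W ∘ Φ_a`:
    ((∀ a, L'.anchor (Fver a) = L.anchor a) ∧
     (∀ c, Fhor (V.d c) = W.d (Fc c)) ∧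
     (∀ a b, W.conn1.conn (Fver a) (Fhor b) - Fhor (V.conn1.conn a b) = W.d (Phi a b))) := by
  have components :
      (∀ g : R × B'd,
        (fun a => Fhd ((dD0' g).1 (Fver a)) + Phid (dD0' g).2.1 a,
          Fcd (dD0' g).2.1, Fvd (dD0' g).2.2) = dD0 (g.1, Fhd g.2)) ↔
      (∀ f, Fvd (dA0' f) = dA0 f) ∧ (∀ β, Fcd (Wdd β) = Vdd (Fhd β)) ∧
        ∀ β a, Fhd (c1s' (Fver a) β) + Phid (Wdd β) a = c1s a (Fhd β) := by
    simp only [Prod.forall, hdD0, hdD0', Prod.mk.injEq, funext_iff, forall_and, forall_const]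
    tauto
  rw [components, pullback_dA_eq_iff_anchor_comp L L' Fver pA pA' sepAd dA0 hdA0 dA0' hdA0' Fvd hFvd,
    dual_comp_eq_iff_comp_eq V.d W.d Fhor Fc pB pC pB' pC' sepCd sepB' Vdd hVdd Wdd hWdd Fhd hFhd
      Fcd hFcd]
  exact and_congr_right fun hanchor => and_congr_right' <|
    pullback_linear_part_eq_iff L L' V.conn1.conn W.conn1.conn W.d Fver Fhor Phi pB pB' pC'
      sepBd sepB' c1s hc1s c1s' hc1s' Wdd hWdd Fhd hFhd Phid hPhid hanchor

theorem Fpull_dD_comm_on_functions_iff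
    (L : LieAlgebroid R A) (L' : LieAlgebroid R A')
    (V : TwoTermRUTH R L Cc B) (W : TwoTermRUTH R L' Cc' B')
    -- the components of the DVB morphism `F`
    (Fver : A →ₗ[R] A') (Fhor : B →ₗ[R] B') (Fc : Cc →ₗ[R] Cc')
    (Phi : A →ₗ[R] B →ₗ[R] Cc')
    -- duality pairings (nondegenerate)
    (pB : Bd →ₗ[R] B →ₗ[R] R) (pC : Cd →ₗ[R] Cc →ₗ[R] R) (pA : Ad →ₗ[R] A →ₗ[R] R)
    (pB' : B'd →ₗ[R] B' →ₗ[R] R) (pC' : C'd →ₗ[R] Cc' →ₗ[R] R)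
    (pA' : A'd →ₗ[R] A' →ₗ[R] R)
    (sepBd : ∀ ψ χ : Bd, (∀ b, pB ψ b = pB χ b) → ψ = χ)
    (sepCd : ∀ γ δ : Cd, (∀ c, pC γ c = pC δ c) → γ = δ)
    (sepAd : ∀ ψ χ : Ad, (∀ a, pA ψ a = pA χ a) → ψ = χ)
    (sepB' : ∀ b₁ b₂ : B', (∀ β, pB' β b₁ = pB' β b₂) → b₁ = b₂)
    (sepC' : ∀ c₁ c₂ : Cc', (∀ γ, pC' γ c₁ = pC' γ c₂) → c₁ = c₂)
    -- duals of the structure maps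
    (c1s : A → Bd → Bd)
    (hc1s : ∀ a ψ b, pB (c1s a ψ) b = L.anchor a (pB ψ b) - pB ψ (V.conn1.conn a b))
    (c1s' : A' → B'd → B'd)
    (hc1s' : ∀ a' β b',
        pB' (c1s' a' β) b' = L'.anchor a' (pB' β b') - pB' β (W.conn1.conn a' b'))
    (Vdd : Bd →ₗ[R] Cd) (hVdd : ∀ ψ c, pC (Vdd ψ) c = pB ψ (V.d c))
    (Wdd : B'd →ₗ[R] C'd) (hWdd : ∀ β c', pC' (Wdd β) c' = pB' β (W.d c'))
    (dA0 : R → Ad) (hdA0 : ∀ f a, pA (dA0 f) a = L.anchor a f)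
    (dA0' : R → A'd) (hdA0' : ∀ f a', pA' (dA0' f) a' = L'.anchor a' f)
    -- duals of the components of `F`
    (Fhd : B'd →ₗ[R] Bd) (hFhd : ∀ β b, pB (Fhd β) b = pB' β (Fhor b))
    (Fcd : C'd →ₗ[R] Cd) (hFcd : ∀ γ c, pC (Fcd γ) c = pC' γ (Fc c))
    (Fvd : A'd →ₗ[R] Ad) (hFvd : ∀ ψ a, pA (Fvd ψ) a = pA' ψ (Fver a))
    (Phid : C'd → A → Bd) (hPhid : ∀ γ a b, pB (Phid γ a) b = pC' γ (Phi a b))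
    -- the Lie algebroid differentials in degree 0, with values the triples
    -- `(Q, γ, ψ) ∈ Γ(A^* ⊗ B^*) ⊕ Γ(C^*) ⊕ Γ(A^*)` of sections of the horizontal dual
    (dD0 : R × Bd → (A → Bd) × Cd × Ad)
    (hdD0 : ∀ f ψ, dD0 (f, ψ) = (fun a => c1s a ψ, Vdd ψ, dA0 f))
    (dD0' : R × B'd → (A' → B'd) × C'd × A'd)
    (hdD0' : ∀ f β, dD0' (f, β) = (fun a' => c1s' a' β, Wdd β, dA0' f)) :
    -- `F^* ∘ d_{D'} = d_D ∘ F^*` on functions …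
    (∀ g : R × B'd,
        (fun a => Fhd ((dD0' g).1 (Fver a)) + Phid (dD0' g).2.1 a,
          Fcd (dD0' g).2.1, Fvd (dD0' g).2.2)
        = dD0 (g.1, Fhd g.2)) ↔
    -- … iff `ρ_{A'} ∘ F_ver = ρ_A`, `F_hor ∘ ∂_V = ∂_W ∘ F_c`, and
    -- `∇^{Hom}_a F_hor = ∂_W ∘ Φ_a`:
    ((∀ a, L'.anchor (Fver a) = L.anchor a) ∧
     (∀ c, Fhor (V.d c) = W.d (Fc c)) ∧
     (∀ a b, W.conn1.conn (Fver a) (Fhor b) - Fhor (V.conn1.conn a b) = W.d (Phi a b))) :=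
  Fpull_dD_comm_on_functions_iff_general L L' V W Fver Fhor Fc Phi pB pC pA pB' pC' pA' sepBd sepCd
    sepAd sepB' c1s hc1s c1s' hc1s' Vdd hVdd Wdd hWdd dA0 hdA0 dA0' hdA0' Fhd hFhd Fcd hFcd Fvd hFvd
    Phid hPhid dD0 hdD0 dD0' hdD0'
end MorphModel
end

section
/- Let (A,[·,·]_A,ρ_A) be a Lie algebroid over M, ∇ a TM-connection on A, ad_∇ the adjoint representation of A on A[0]⊕TM[1] and ad^⊤_∇ the coadjoint representation (its dual) on T*M[0]⊕A*[1]. A pair (μ,ν) with μ: A → T*M, ν: A → ∧²T*M is an IM-2-form (i.e. ⟨μ(a),ρ_A(b)⟩ = −⟨μ(b),ρ_A(a)⟩, μ([a,b]) = ℒ_{ρ_A(a)}μ(b) − i_{ρ_A(b)}(dμ(a)+ν(a)), ν([a,b]) = ℒ_{ρ_A(a)}ν(b) − i_{ρ_A(b)}dν(a) for all a,b ∈ Γ(A)) if and only if (μ, −μ*, ν + d_{∇*}μ*) are the components of a morphism of representations up to homotopy from ad_∇ to ad^⊤_∇, where ν ∈ Ω¹(A;∧²T*M) is viewed inside Ω¹(A;Hom(TM,T*M))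 and d_{∇*} is the Koszul differential of the dual connection. -/
/-!
A morphism into the dual of a representation up to homotopy is the same as a family of
pairings compatible with the structure operators: `∂`, the two connections and the curvature.
For `ad_∇ → ad^⊤_∇` with components `(μ, −μ^*, ν + d_{∇^*}μ^*)`, the `∂`-equation is the
skew-symmetry `⟨μ(a), ρ(b)⟩ = −⟨μ(b), ρ(a)⟩`. Granting it, the `∇`-equation in degree 0 is the
bracket equation for `μ`, the one in degree 1 is a rearrangement of the same equation, and the
curvature equation is the bracket equation for `ν`: all `∇`-dependent terms cancel, using the
skew-symmetries of `μ` and `ν` and the Jacobi identity for vector fields.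
-/

theorem RUTHHomOver.exists_iff {R : Type*} [CommRing R]
    {A : Type*} [AddCommGroup A] [Module R A] {A' : Type*} [AddCommGroup A'] [Module R A']
    {L : LieAlgebroid R A} {L' : LieAlgebroid R A'} {T : A →ₗ[R] A'}
    {V0 V1 : Type*} [AddCommGroup V0] [Module R V0] [AddCommGroup V1] [Module R V1]
    {W0 W1 : Type*} [AddCommGroup W0] [Module R W0] [AddCommGroup W1] [Module R W1]
    {V : TwoTermRUTH R L V0 V1} {W : TwoTermRUTH R L' W0 W1}
    (φ0 : V0 →ₗ[R] W0) (φ1 : V1 →ₗ[R] W1) (Φ : A →ₗ[R] (V1 →ₗ[R] W0)) :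
    (∃ G : RUTHHomOver T V W, G.φ0 = φ0 ∧ G.φ1 = φ1 ∧ G.Φ = Φ) ↔
      (∀ v, φ1 (V.d v) = W.d (φ0 v)) ∧
      (∀ a v, W.conn0.conn (T a) (φ0 v) - φ0 (V.conn0.conn a v) = Φ a (V.d v)) ∧
      (∀ a w, W.conn1.conn (T a) (φ1 w) - φ1 (V.conn1.conn a w) = W.d (Φ a w)) ∧
      (∀ a b w,
          (W.conn0.conn (T a) (Φ b w) - Φ b (V.conn1.conn a w))
        - (W.conn0.conn (T b) (Φ a w) - Φ a (V.conn1.conn b w))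
        - Φ (L.bracket a b) w
        = φ0 (V.K a b w) - W.K (T a) (T b) (φ1 w)) := by
  constructor
  · rintro ⟨G, rfl, rfl, rfl⟩
    exact ⟨G.comm_d, G.comm0, G.comm1, G.commK⟩
  · rintro ⟨hd, h0, h1, hK⟩
    exact ⟨⟨φ0, φ1, Φ, hd, h0, h1, hK⟩, rfl, rfl, rfl⟩

theorem LinearMap.eq_iff_forall_apply_eq_of_separating {R M N : Type*} [CommSemiring R]
    [AddCommMonoid M] [Module R M] [AddCommMonoid N] [Module R N] (p : M →ₗ[R] N →ₗ[R] R)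
    (sep : ∀ m m' : M, (∀ n, p m n = p m' n) → m = m') {m m' : M} :
    m = m' ↔ ∀ n, p m n = p m' n :=
  ⟨fun h _ => h ▸ rfl, sep m m'⟩

namespace TwoTermRUTH

variable {R : Type*} [CommRing R] {A : Type*} [AddCommGroup A] [Module R A]
  {L : LieAlgebroid R A}
  {V0 V1 W0 W1 : Type*} [AddCommGroup V0] [Module R V0] [AddCommGroup V1] [Module R V1]
  [AddCommGroup W0] [Module R W0] [AddCommGroup W1] [Module R W1]

/-- `W` is dual to `V`, with `W0` paired against `V1` and `W1` against `V0`: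
its structure operators are `(∂^*, ∇^*, -K^*)`. -/
structure IsDual (W : TwoTermRUTH R L W0 W1) (V : TwoTermRUTH R L V0 V1)
    (p1 : W0 →ₗ[R] V1 →ₗ[R] R) (p0 : W1 →ₗ[R] V0 →ₗ[R] R) : Prop where
  d_pairing : ∀ ω v, p0 (W.d ω) v = p1 ω (V.d v)
  conn0_pairing : ∀ a ω x,
    p1 (W.conn0.conn a ω) x = L.anchor a (p1 ω x) - p1 ω (V.conn1.conn a x)
  conn1_pairing : ∀ a ξ v,
    p0 (W.conn1.conn a ξ) v = L.anchor a (p0 ξ v) - p0 ξ (V.conn0.conn a v)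
  K_pairing : ∀ a b ξ x, p1 (W.K a b ξ) x = - p0 ξ (V.K a b x)

theorem IsDual.exists_hom_iff {W : TwoTermRUTH R L W0 W1} {V : TwoTermRUTH R L V0 V1}
    {p1 : W0 →ₗ[R] V1 →ₗ[R] R} {p0 : W1 →ₗ[R] V0 →ₗ[R] R} (hW : W.IsDual V p1 p0)
    (sep1 : ∀ ω ω' : W0, (∀ x, p1 ω x = p1 ω' x) → ω = ω')
    (sep0 : ∀ ξ ξ' : W1, (∀ v, p0 ξ v = p0 ξ' v) → ξ = ξ')
    (φ0 : V0 →ₗ[R] W0) (φ1 : V1 →ₗ[R] W1) (Φ : A →ₗ[R] (V1 →ₗ[R] W0)) :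
    (∃ G : RUTHHomOver LinearMap.id V W, G.φ0 = φ0 ∧ G.φ1 = φ1 ∧ G.Φ = Φ) ↔
      (∀ v c, p0 (φ1 (V.d v)) c = p1 (φ0 v) (V.d c)) ∧
      (∀ a v x, L.anchor a (p1 (φ0 v) x) - p1 (φ0 v) (V.conn1.conn a x)
          - p1 (φ0 (V.conn0.conn a v)) x = p1 (Φ a (V.d v)) x) ∧
      (∀ a w c, L.anchor a (p0 (φ1 w) c) - p0 (φ1 w) (V.conn0.conn a c)
          - p0 (φ1 (V.conn1.conn a w)) c = p1 (Φ a w) (V.d c)) ∧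
      (∀ a b w y,
          (L.anchor a (p1 (Φ b w) y) - p1 (Φ b w) (V.conn1.conn a y)
            - p1 (Φ b (V.conn1.conn a w)) y)
        - (L.anchor b (p1 (Φ a w) y) - p1 (Φ a w) (V.conn1.conn b y)
            - p1 (Φ a (V.conn1.conn b w)) y)
        - p1 (Φ (L.bracket a b) w) y
        = p1 (φ0 (V.K a b w)) y + p0 (φ1 w) (V.K a b y)) := by
  simp only [RUTHHomOver.exists_iff, LinearMap.eq_iff_forall_apply_eq_of_separating p1 sep1,
    LinearMap.eq_iff_forall_apply_eq_of_separating p0 sep0, LinearMap.id_coe, id_eq, map_sub,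
    LinearMap.sub_apply, hW.d_pairing, hW.conn0_pairing, hW.conn1_pairing, hW.K_pairing,
    sub_neg_eq_add]

variable {LT : LieAlgebroid R (Derivation ℤ R R)}

/-- `V` is `ad_∇` for the `TM`-connection `D`: anchor, basic connections, basic curvature. -/
structure IsAdjoint (V : TwoTermRUTH R L A (Derivation ℤ R R))
    (D : Connection R LT A) : Prop where
  d_eq : ∀ a, V.d a = L.anchor a
  conn0_eq : ∀ a b, V.conn0.conn a b = L.bracket a b + D.conn (L.anchor b) a
  conn1_eq : ∀ a x, V.conn1.conn a x = ⁅L.anchor a, x⁆ + L.anchor (D.conn x a)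
  K_eq : ∀ a b x, V.K a b x =
    D.conn x (L.bracket a b) - L.bracket (D.conn x a) b - L.bracket a (D.conn x b)
    + D.conn (V.conn1.conn a x) b - D.conn (V.conn1.conn b x) a

end TwoTermRUTH

section IMTwoForm

variable {R : Type*} [CommRing R] {A : Type*} [AddCommGroup A] [Module R A]
  {Ω1 : Type*} [AddCommGroup Ω1] [Module R Ω1]
  (L : LieAlgebroid R A) (pX : Ω1 →ₗ[R] Derivation ℤ R R →ₗ[R] R) (μ : A →ₗ[R] Ω1)
  (ν : A →ₗ[R] Derivation ℤ R R →ₗ[R] Derivation ℤ R R →ₗ[R] R)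

-- The three equations of an IM-2-form `(μ, ν)`.
def IMAnchorSkew : Prop :=
  ∀ a b, pX (μ a) (L.anchor b) = - pX (μ b) (L.anchor a)

def IMMuBracket : Prop :=
  ∀ a b x, pX (μ (L.bracket a b)) x =
    (L.anchor a (pX (μ b) x) - pX (μ b) ⁅L.anchor a, x⁆)
    - ((L.anchor b) (pX (μ a) x) - x (pX (μ a) (L.anchor b)) - pX (μ a) ⁅L.anchor b, x⁆)
    - ν a (L.anchor b) x

def IMNuBracket : Prop :=
  ∀ a b x y, ν (L.bracket a b) x y =
    (L.anchor a (ν b x y) - ν b ⁅L.anchor a, x⁆ y - ν b x ⁅L.anchor a, y⁆)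
    - ((L.anchor b) (ν a x y) - x (ν a (L.anchor b) y) + y (ν a (L.anchor b) x)
        - ν a ⁅L.anchor b, x⁆ y + ν a ⁅L.anchor b, y⁆ x
        - ν a ⁅x, y⁆ (L.anchor b))

variable {L pX μ ν}

theorem IMMuBracket.nu_anchor_skew (h1 : IMAnchorSkew L pX μ) (h2 : IMMuBracket L pX μ ν)
    (a b : A) (x : Derivation ℤ R R) : ν a (L.anchor b) x = - ν b (L.anchor a) x := by
  have hskew : pX (μ (L.bracket b a)) x = - pX (μ (L.bracket a b)) x := by
    rw [L.bracket_skew b a, map_neg, map_neg, LinearMap.neg_apply]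
  have hx : x (pX (μ a) (L.anchor b)) = - x (pX (μ b) (L.anchor a)) := by
    rw [h1 a b, map_neg]
  linear_combination h2 a b x + h2 b a x - hskew + hx

variable {LT : LieAlgebroid R (Derivation ℤ R R)}

variable (pX μ ν) in
/-- `⟨(ν + d_{∇^*}μ^*)(a) x, y⟩`, with `d_{∇^*}μ^*` unfolded through `⟨μ^* x, a⟩ = ⟨μ a, x⟩`. -/
def imHomotopyPairing (D : Connection R LT A) (a : A) (x y : Derivation ℤ R R) : R :=
  ν a x y + x (pX (μ a) y) - y (pX (μ a) x) - pX (μ a) ⁅x, y⁆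
    - pX (μ (D.conn x a)) y + pX (μ (D.conn y a)) x

theorem imHomotopyPairing_eq {Ad : Type*} [AddCommGroup Ad] [Module R Ad]
    {pA : Ad →ₗ[R] A →ₗ[R] R} {D : Connection R LT A} {mustar : Derivation ℤ R R →ₗ[R] Ad}
    (hmustar : ∀ x a, pA (mustar x) a = pX (μ a) x) {dstar : Connection R LT Ad}
    (hdstar : ∀ x ξ a, pA (dstar.conn x ξ) a = x (pA ξ a) - pA ξ (D.conn x a))
    {Φ : A →ₗ[R] Derivation ℤ R R →ₗ[R] Ω1}
    (hΦ : ∀ a x y, pX (Φ a x) y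
      = ν a x y + pA (dstar.conn x (mustar y) - dstar.conn y (mustar x) - mustar ⁅x, y⁆) a)
    (a : A) (x y : Derivation ℤ R R) : pX (Φ a x) y = imHomotopyPairing pX μ ν D a x y := by
  simp only [hΦ, map_sub, LinearMap.sub_apply, hdstar, hmustar, imHomotopyPairing]
  ring

section AdjointToCoadjoint

variable {D : Connection R LT A} {V : TwoTermRUTH R L A (Derivation ℤ R R)}
  {Φ : A →ₗ[R] Derivation ℤ R R →ₗ[R] Ω1} {Ad : Type*} [AddCommGroup Ad] [Module R Ad]
  {pA : Ad →ₗ[R] A →ₗ[R] R} {mustar : Derivation ℤ R R →ₗ[R] Ad}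

theorem pairing_comm_d_iff_imAnchorSkew (hV : V.IsAdjoint D)
    (hmustar : ∀ x a, pA (mustar x) a = pX (μ a) x) :
    (∀ v c, pA ((-mustar) (V.d v)) c = pX (μ v) (V.d c)) ↔ IMAnchorSkew L pX μ := by
  simp only [LinearMap.neg_apply, map_neg, hmustar, hV.d_eq]
  exact forall₂_congr fun _ _ => eq_comm

theorem pairing_comm0_iff_imMuBracket (hV : V.IsAdjoint D)
    (hΦ : ∀ a x y, pX (Φ a x) y = imHomotopyPairing pX μ ν D a x y) (h1 : IMAnchorSkew L pX μ) :
    (∀ a v x, L.anchor a (pX (μ v) x) - pX (μ v) (V.conn1.conn a x)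
        - pX (μ (V.conn0.conn a v)) x = pX (Φ a (V.d v)) x) ↔ IMMuBracket L pX μ ν := by
  refine forall₃_congr fun a v x => ?_
  simp only [hV.d_eq, hV.conn0_eq, hV.conn1_eq, hΦ, imHomotopyPairing, map_add,
    LinearMap.add_apply]
  refine (eq_iff_eq_of_sub_eq_sub ?_).trans eq_comm
  linear_combination -h1 (D.conn x a) v

theorem pairing_comm1_of_imMuBracket (hV : V.IsAdjoint D)
    (hΦ : ∀ a x y, pX (Φ a x) y = imHomotopyPairing pX μ ν D a x y)
    (hmustar : ∀ x a, pA (mustar x) a = pX (μ a) x) (hν : ∀ a, (ν a).IsAlt)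
    (h1 : IMAnchorSkew L pX μ) (h2 : IMMuBracket L pX μ ν) (a : A) (w : Derivation ℤ R R) (c : A) :
    L.anchor a (pA ((-mustar) w) c) - pA ((-mustar) w) (V.conn0.conn a c)
      - pA ((-mustar) (V.conn1.conn a w)) c = pX (Φ a w) (V.d c) := by
  have hlie : pX (μ a) ⁅L.anchor c, w⁆ = - pX (μ a) ⁅w, L.anchor c⁆ := by
    rw [← lie_skew, map_neg]
  simp only [LinearMap.neg_apply, map_neg, hmustar, hV.d_eq, hV.conn0_eq, hV.conn1_eq, hΦ,
    imHomotopyPairing, map_add, LinearMap.add_apply]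
  linear_combination h1 (D.conn w a) c + hlie + (hν a).neg (L.anchor c) w + h2 a c w

set_option maxHeartbeats 400000 in
theorem pairing_commK_iff_imNuBracket (hV : V.IsAdjoint D)
    (hΦ : ∀ a x y, pX (Φ a x) y = imHomotopyPairing pX μ ν D a x y)
    (hmustar : ∀ x a, pA (mustar x) a = pX (μ a) x) (hν : ∀ a, (ν a).IsAlt)
    (h1 : IMAnchorSkew L pX μ) (h2 : IMMuBracket L pX μ ν) :
    (∀ a b w y,
        (L.anchor a (pX (Φ b w) y) - pX (Φ b w) (V.conn1.conn a y)
          - pX (Φ b (V.conn1.conn a w)) y)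
      - (L.anchor b (pX (Φ a w) y) - pX (Φ a w) (V.conn1.conn b y)
          - pX (Φ a (V.conn1.conn b w)) y)
      - pX (Φ (L.bracket a b) w) y
      = pX (μ (V.K a b w)) y + pA ((-mustar) w) (V.K a b y)) ↔ IMNuBracket L ν := by
  refine forall₄_congr fun a b w y => ?_
  have h4 := h2.nu_anchor_skew h1
  unfold IMMuBracket at h2
  simp only [LinearMap.neg_apply, map_neg, hmustar, hV.conn1_eq, hV.K_eq, hΦ, imHomotopyPairing,
    h2, D.conn_add_left, map_add, map_sub, LinearMap.add_apply, LinearMap.sub_apply,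
    Derivation.add_apply, Derivation.commutator_apply, lie_add]
  have hμ_skew_deriv : ∀ (X : Derivation ℤ R R) p q,
      X (pX (μ p) (L.anchor q)) = - X (pX (μ q) (L.anchor p)) := by
    intro X p q
    rw [h1 p q, map_neg]
  have hlie : ∀ p (X Y : Derivation ℤ R R), pX (μ p) ⁅X, Y⁆ = - pX (μ p) ⁅Y, X⁆ := by
    intro p X Y
    rw [← lie_skew, map_neg]
  have hjac : ∀ p (X Y Z : Derivation ℤ R R),
      pX (μ p) ⁅X, ⁅Y, Z⁆⁆ = pX (μ p) ⁅⁅X, Y⁆, Z⁆ + pX (μ p) ⁅Y, ⁅X, Z⁆⁆ := by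
    intro p X Y Z
    rw [leibniz_lie, map_add]
  have hν_skew : ∀ c (X Y : Derivation ℤ R R), ν c X Y = - ν c Y X :=
    fun c X Y => ((hν c).neg Y X).symm
  refine (eq_iff_eq_of_sub_eq_sub ?_).trans eq_comm
  linear_combination - h1 (D.conn w a) (D.conn y b) + hμ_skew_deriv y (D.conn w a) b
    + h1 (D.conn w b) (D.conn y a) - hμ_skew_deriv w (D.conn y a) b
    + hν_skew a ⁅L.anchor b, y⁆ w - hν_skew a ⁅w, y⁆ (L.anchor b)
    - hlie a (L.anchor (D.conn y b)) w + hν_skew a (L.anchor (D.conn y b)) w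
    + hlie b (L.anchor (D.conn y a)) w - hν_skew b (L.anchor (D.conn y a)) w
    + hjac a (L.anchor b) w y - hjac b (L.anchor a) w y
    - h4 (D.conn w a) b y + h4 (D.conn y a) b w

end AdjointToCoadjoint

end IMTwoForm

theorem im_two_form_iff_ruth_morphism_ad_to_coad_general
    {R : Type*} [CommRing R]
    {A : Type*} [AddCommGroup A] [Module R A]
    {Ω1 Ad : Type*} [AddCommGroup Ω1] [Module R Ω1] [AddCommGroup Ad] [Module R Ad]
    (L : LieAlgebroid R A)
    -- the tangent Lie algebroid `TM`
    (LT : LieAlgebroid R (Derivation ℤ R R))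
    -- a `TM`-connection `∇` on `A`
    (D : Connection R LT A)
    -- duality pairings (nondegenerate)
    (pX : Ω1 →ₗ[R] Derivation ℤ R R →ₗ[R] R)
    (pA : Ad →ₗ[R] A →ₗ[R] R)
    (sepΩ1 : ∀ ω ω' : Ω1, (∀ x, pX ω x = pX ω' x) → ω = ω')
    (sepAd : ∀ ξ ξ' : Ad, (∀ a, pA ξ a = pA ξ' a) → ξ = ξ')
    -- the adjoint representation `ad_∇` of `A` on `A[0] ⊕ TM[1]`, with `∂ = ρ_A`,
    -- the basic connection and the basic curvature
    (adrep : TwoTermRUTH R L A (Derivation ℤ R R))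
    (had_d : ∀ a, adrep.d a = L.anchor a)
    (had_0 : ∀ a b, adrep.conn0.conn a b = L.bracket a b + D.conn (L.anchor b) a)
    (had_1 : ∀ a x, adrep.conn1.conn a x = ⁅L.anchor a, x⁆ + L.anchor (D.conn x a))
    (had_K : ∀ a b x, adrep.K a b x =
        D.conn x (L.bracket a b) - L.bracket (D.conn x a) b - L.bracket a (D.conn x b)
        + D.conn (adrep.conn1.conn a x) b - D.conn (adrep.conn1.conn b x) a)
    -- the coadjoint representation `ad^⊤_∇` of `A` on `T^*M[0] ⊕ A^*[1]`, dual to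
    -- `ad_∇`: structure operators `(∂^*, ∇^*, −K^*)`
    (coad : TwoTermRUTH R L Ω1 Ad)
    (hco_d : ∀ ω a, pA (coad.d ω) a = pX ω (L.anchor a))
    (hco_0 : ∀ a ω x, pX (coad.conn0.conn a ω) x
        = L.anchor a (pX ω x) - pX ω (adrep.conn1.conn a x))
    (hco_1 : ∀ a ξ b, pA (coad.conn1.conn a ξ) b
        = L.anchor a (pA ξ b) - pA ξ (adrep.conn0.conn a b))
    (hco_K : ∀ a b ξ x, pX (coad.K a b ξ) x = - pA ξ (adrep.K a b x))
    -- the pair `(μ, ν)`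
    (μ : A →ₗ[R] Ω1)
    (ν : A →ₗ[R] Derivation ℤ R R →ₗ[R] Derivation ℤ R R →ₗ[R] R)
    (hν_alt : ∀ a x, ν a x x = 0)
    -- `μ^* : TM → A^*`,  `⟨μ^*(x), a⟩ = ⟨μ(a), x⟩`
    (mustar : Derivation ℤ R R →ₗ[R] Ad)
    (hmustar : ∀ x a, pA (mustar x) a = pX (μ a) x)
    -- the dual connection `∇^*` on `A^*`
    (dstar : Connection R LT Ad)
    (hdstar : ∀ x ξ a, pA (dstar.conn x ξ) a = x (pA ξ a) - pA ξ (D.conn x a))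
    -- `Φ = ν + d_{∇^*}μ^* ∈ Ω¹(A; Hom(TM, T^*M))`
    (PhiLM : A →ₗ[R] Derivation ℤ R R →ₗ[R] Ω1)
    (hPhi : ∀ a x y, pX (PhiLM a x) y
        = ν a x y
          + pA (dstar.conn x (mustar y) - dstar.conn y (mustar x) - mustar ⁅x, y⁆) a) :
    -- `(μ, ν)` is an IM-2-form …
    (( -- (1)  `⟨μ(a), ρ_A(b)⟩ = −⟨μ(b), ρ_A(a)⟩`
      (∀ a b, pX (μ a) (L.anchor b) = - pX (μ b) (L.anchor a)) ∧
      -- (2)  `μ([a,b]) = ℒ_{ρ_A(a)} μ(b) − i_{ρ_A(b)}(dμ(a) + ν(a))`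
      (∀ a b x, pX (μ (L.bracket a b)) x =
        (L.anchor a (pX (μ b) x) - pX (μ b) ⁅L.anchor a, x⁆)
        - ((L.anchor b) (pX (μ a) x) - x (pX (μ a) (L.anchor b))
            - pX (μ a) ⁅L.anchor b, x⁆)
        - ν a (L.anchor b) x) ∧
      -- (3)  `ν([a,b]) = ℒ_{ρ_A(a)} ν(b) − i_{ρ_A(b)} dν(a)`
      (∀ a b x y, ν (L.bracket a b) x y =
        (L.anchor a (ν b x y) - ν b ⁅L.anchor a, x⁆ y - ν b x ⁅L.anchor a, y⁆)
        - ((L.anchor b) (ν a x y) - x (ν a (L.anchor b) y) + y (ν a (L.anchor b) x)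
            - ν a ⁅L.anchor b, x⁆ y + ν a ⁅L.anchor b, y⁆ x
            - ν a ⁅x, y⁆ (L.anchor b)))) ↔
    -- … iff `(μ, −μ^*, ν + d_{∇^*}μ^*)` is a morphism `ad_∇ ⇒ ad^⊤_∇`
    (∃ G : RUTHHomOver (LinearMap.id : A →ₗ[R] A) adrep coad,
        G.φ0 = μ ∧ G.φ1 = - mustar ∧ G.Φ = PhiLM)) := by
  have hV : adrep.IsAdjoint D := ⟨had_d, had_0, had_1, had_K⟩
  have hW : coad.IsDual adrep pX pA := ⟨fun ω a => by rw [hco_d, had_d], hco_0, hco_1, hco_K⟩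
  have hΦ := imHomotopyPairing_eq hmustar hdstar hPhi
  rw [hW.exists_hom_iff sepΩ1 sepAd, pairing_comm_d_iff_imAnchorSkew hV hmustar]
  constructor
  · rintro ⟨h1, h2, h3⟩
    exact ⟨h1, (pairing_comm0_iff_imMuBracket hV hΦ h1).2 h2,
      pairing_comm1_of_imMuBracket hV hΦ hmustar hν_alt h1 h2,
      (pairing_commK_iff_imNuBracket hV hΦ hmustar hν_alt h1 h2).2 h3⟩
  · rintro ⟨h1, h0, -, hK⟩
    have h2 := (pairing_comm0_iff_imMuBracket hV hΦ h1).1 h0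
    exact ⟨h1, h2, (pairing_commK_iff_imNuBracket hV hΦ hmustar hν_alt h1 h2).1 hK⟩

theorem im_two_form_iff_ruth_morphism_ad_to_coad
    {R : Type*} [CommRing R]
    {A : Type*} [AddCommGroup A] [Module R A]
    {Ω1 Ad : Type*} [AddCommGroup Ω1] [Module R Ω1] [AddCommGroup Ad] [Module R Ad]
    (L : LieAlgebroid R A)
    -- the tangent Lie algebroid `TM`
    (LT : LieAlgebroid R (Derivation ℤ R R))
    (hanchor : ∀ X, LT.anchor X = X)
    (hbracket : ∀ X Y, LT.bracket X Y = ⁅X, Y⁆)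
    -- a `TM`-connection `∇` on `A`
    (D : Connection R LT A)
    -- duality pairings (nondegenerate)
    (pX : Ω1 →ₗ[R] Derivation ℤ R R →ₗ[R] R)
    (pA : Ad →ₗ[R] A →ₗ[R] R)
    (sepΩ1 : ∀ ω ω' : Ω1, (∀ x, pX ω x = pX ω' x) → ω = ω')
    (sepAd : ∀ ξ ξ' : Ad, (∀ a, pA ξ a = pA ξ' a) → ξ = ξ')
    -- the adjoint representation `ad_∇` of `A` on `A[0] ⊕ TM[1]`, with `∂ = ρ_A`,
    -- the basic connection and the basic curvature
    (adrep : TwoTermRUTH R L A (Derivation ℤ R R))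
    (had_d : ∀ a, adrep.d a = L.anchor a)
    (had_0 : ∀ a b, adrep.conn0.conn a b = L.bracket a b + D.conn (L.anchor b) a)
    (had_1 : ∀ a x, adrep.conn1.conn a x = ⁅L.anchor a, x⁆ + L.anchor (D.conn x a))
    (had_K : ∀ a b x, adrep.K a b x =
        D.conn x (L.bracket a b) - L.bracket (D.conn x a) b - L.bracket a (D.conn x b)
        + D.conn (adrep.conn1.conn a x) b - D.conn (adrep.conn1.conn b x) a)
    -- the coadjoint representation `ad^⊤_∇` of `A` on `T^*M[0] ⊕ A^*[1]`, dual to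
    -- `ad_∇`: structure operators `(∂^*, ∇^*, −K^*)`
    (coad : TwoTermRUTH R L Ω1 Ad)
    (hco_d : ∀ ω a, pA (coad.d ω) a = pX ω (L.anchor a))
    (hco_0 : ∀ a ω x, pX (coad.conn0.conn a ω) x
        = L.anchor a (pX ω x) - pX ω (adrep.conn1.conn a x))
    (hco_1 : ∀ a ξ b, pA (coad.conn1.conn a ξ) b
        = L.anchor a (pA ξ b) - pA ξ (adrep.conn0.conn a b))
    (hco_K : ∀ a b ξ x, pX (coad.K a b ξ) x = - pA ξ (adrep.K a b x))
    -- the pair `(μ, ν)`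
    (μ : A →ₗ[R] Ω1)
    (ν : A →ₗ[R] Derivation ℤ R R →ₗ[R] Derivation ℤ R R →ₗ[R] R)
    (hν_alt : ∀ a x, ν a x x = 0)
    -- `μ^* : TM → A^*`,  `⟨μ^*(x), a⟩ = ⟨μ(a), x⟩`
    (mustar : Derivation ℤ R R →ₗ[R] Ad)
    (hmustar : ∀ x a, pA (mustar x) a = pX (μ a) x)
    -- the dual connection `∇^*` on `A^*`
    (dstar : Connection R LT Ad)
    (hdstar : ∀ x ξ a, pA (dstar.conn x ξ) a = x (pA ξ a) - pA ξ (D.conn x a))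
    -- `Φ = ν + d_{∇^*}μ^* ∈ Ω¹(A; Hom(TM, T^*M))`
    (PhiLM : A →ₗ[R] Derivation ℤ R R →ₗ[R] Ω1)
    (hPhi : ∀ a x y, pX (PhiLM a x) y
        = ν a x y
          + pA (dstar.conn x (mustar y) - dstar.conn y (mustar x) - mustar ⁅x, y⁆) a) :
    -- `(μ, ν)` is an IM-2-form …
    (( -- (1)  `⟨μ(a), ρ_A(b)⟩ = −⟨μ(b), ρ_A(a)⟩`
      (∀ a b, pX (μ a) (L.anchor b) = - pX (μ b) (L.anchor a)) ∧
      -- (2)  `μ([a,b]) = ℒ_{ρ_A(a)} μ(b) − i_{ρ_A(b)}(dμ(a) + ν(a))`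
      (∀ a b x, pX (μ (L.bracket a b)) x =
        (L.anchor a (pX (μ b) x) - pX (μ b) ⁅L.anchor a, x⁆)
        - ((L.anchor b) (pX (μ a) x) - x (pX (μ a) (L.anchor b))
            - pX (μ a) ⁅L.anchor b, x⁆)
        - ν a (L.anchor b) x) ∧
      -- (3)  `ν([a,b]) = ℒ_{ρ_A(a)} ν(b) − i_{ρ_A(b)} dν(a)`
      (∀ a b x y, ν (L.bracket a b) x y =
        (L.anchor a (ν b x y) - ν b ⁅L.anchor a, x⁆ y - ν b x ⁅L.anchor a, y⁆)
        - ((L.anchor b) (ν a x y) - x (ν a (L.anchor b) y) + y (ν a (L.anchor b) x)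
            - ν a ⁅L.anchor b, x⁆ y + ν a ⁅L.anchor b, y⁆ x
            - ν a ⁅x, y⁆ (L.anchor b)))) ↔
    -- … iff `(μ, −μ^*, ν + d_{∇^*}μ^*)` is a morphism `ad_∇ ⇒ ad^⊤_∇`
    (∃ G : RUTHHomOver (LinearMap.id : A →ₗ[R] A) adrep coad,
        G.φ0 = μ ∧ G.φ1 = - mustar ∧ G.Φ = PhiLM)) :=
  im_two_form_iff_ruth_morphism_ad_to_coad_general L LT D pX pA sepΩ1 sepAd adrep had_d had_0 had_1
    had_K coad hco_d hco_0 hco_1 hco_K μ ν hν_alt mustar hmustar dstar hdstar PhiLM hPhi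
end

section
/- Let ∇ be a TM-connection on a vector bundle B → M and let 𝒟_∇(B) be the double representation of TM on B[0]⊕B[1], with structure operators ∂ = id_B, ∇^0 = ∇^1 = ∇ and K = −R_∇. For a vector subbundle C ⊂ B, the graded subbundle C[0]⊕B[1] is a subrepresentation of 𝒟_∇(B) if and only if ∇ preserves C (i.e. ∇_X Γ(C) ⊂ Γ(C) for all X ∈ Γ(TM)) and the induced connection ∇̂ on the quotient bundle B/C is flat. -/
/-- A graded subbundle `V = V₀ ⊕ V₁ ⊆ W₀ ⊕ W₁` (given by submodules of sections) is a
subrepresentation of the 2-term representation up to homotopy `W` if `V` carries a 2-term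
representation up to homotopy of `A` making the inclusions, together with `Φ = 0`, the
components of a morphism `(A, V) ⇒ (A, W)`. -/
def IsSubrep {R : Type*} [CommRing R]
    {A : Type*} [AddCommGroup A] [Module R A] {L : LieAlgebroid R A}
    {W0 W1 : Type*} [AddCommGroup W0] [Module R W0] [AddCommGroup W1] [Module R W1]
    (W : TwoTermRUTH R L W0 W1) (V0 : Submodule R W0) (V1 : Submodule R W1) : Prop :=
  ∃ (P : TwoTermRUTH R L V0 V1)
    (F : RUTHHomOver (LinearMap.id : A →ₗ[R] A) P W),
      F.φ0 = V0.subtype ∧ F.φ1 = V1.subtype ∧ F.Φ = 0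


/-!
A graded subbundle is a subrepresentation exactly when it is stable under `∂`, both
connections and `K`: the restricted operators then satisfy every axiom, because the ambient
ones do and the inclusions are injective. For `C[0] ⊕ B[1] ⊆ 𝒟_∇(B)` stability under `∂` and
`∇¹` is automatic, stability under `∇⁰` says that `∇` preserves `C`, and stability under
`K = -R_∇` says that `R_∇` takes values in `C`, i.e. that the curvature `π ∘ R_∇` of the
induced connection on `B/C` vanishes.
-/

namespace Connection

variable {R : Type*} [CommRing R] {A : Type*} [AddCommGroup A] [Module R A]
  {L : LieAlgebroid R A} {V : Type*} [AddCommGroup V] [Module R V]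
  (D : Connection R L V) {S : Submodule R V} (hS : ∀ a, ∀ v ∈ S, D.conn a v ∈ S)

def connAddHom (a : A) : V →+ V := AddMonoidHom.mk' (D.conn a) (D.conn_add_right a)

lemma conn_zero_right (a : A) : D.conn a 0 = 0 := (D.connAddHom a).map_zero

lemma conn_sub_right (a : A) (v w : V) : D.conn a (v - w) = D.conn a v - D.conn a w :=
  (D.connAddHom a).map_sub v w

def restrict : Connection R L S where
  conn a v := ⟨D.conn a v, hS a v v.2⟩
  conn_add_left a b v := Subtype.ext (D.conn_add_left a b v)
  conn_smul_left f a v := Subtype.ext (D.conn_smul_left f a v)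
  conn_add_right a v w := Subtype.ext (D.conn_add_right a v w)
  conn_leibniz a f v := Subtype.ext (D.conn_leibniz a f v)

@[simp]
lemma restrict_conn_coe (a : A) (v : S) : ((D.restrict hS).conn a v : V) = D.conn a v := rfl

@[simp]
lemma restrict_curv_coe (a b : A) (v : S) : ((D.restrict hS).curv a b v : V) = D.curv a b v := rfl

def quotient : Connection R L (V ⧸ S) where
  conn a q := Quotient.liftOn' q (fun v => Submodule.Quotient.mk (D.conn a v)) fun v w hvw => by
    rw [Submodule.Quotient.eq, ← D.conn_sub_right]
    exact hS a _ ((Submodule.quotientRel_def S).mp hvw)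
  conn_add_left a b q := Submodule.Quotient.induction_on S q fun v =>
    congrArg Submodule.Quotient.mk (D.conn_add_left a b v)
  conn_smul_left f a q := Submodule.Quotient.induction_on S q fun v =>
    congrArg Submodule.Quotient.mk (D.conn_smul_left f a v)
  conn_add_right a q r := Submodule.Quotient.induction_on S q fun v =>
    Submodule.Quotient.induction_on S r fun w =>
      congrArg Submodule.Quotient.mk (D.conn_add_right a v w)
  conn_leibniz a f q := Submodule.Quotient.induction_on S q fun v =>
    congrArg Submodule.Quotient.mk (D.conn_leibniz a f v)

@[simp]
lemma quotient_conn_mk (a : A) (v : V) :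
    (D.quotient hS).conn a (Submodule.Quotient.mk v) = Submodule.Quotient.mk (D.conn a v) :=
  rfl

lemma quotient_curv_mk (a b : A) (v : V) :
    (D.quotient hS).curv a b (Submodule.Quotient.mk v) = Submodule.Quotient.mk (D.curv a b v) := by
  simp [curv]

theorem exists_flat_quotient_iff (hS : ∀ a, ∀ v ∈ S, D.conn a v ∈ S) :
    (∃ Dq : A → V ⧸ S → V ⧸ S,
      (∀ a v, Dq a (Submodule.Quotient.mk v) = Submodule.Quotient.mk (D.conn a v)) ∧
      (∀ a b q, Dq a (Dq b q) - Dq b (Dq a q) - Dq (L.bracket a b) q = 0)) ↔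
    ∀ a b v, D.curv a b v ∈ S := by
  constructor
  · rintro ⟨Dq, hDq, hflat⟩ a b v
    have h := hflat a b (Submodule.Quotient.mk v)
    simp only [hDq, ← Submodule.Quotient.mk_sub] at h
    exact (Submodule.Quotient.mk_eq_zero S).mp h
  · intro hR
    refine ⟨(D.quotient hS).conn, D.quotient_conn_mk hS, fun a b q => ?_⟩
    induction q using Submodule.Quotient.induction_on with
    | H v =>
      exact (D.quotient_curv_mk hS a b v).trans ((Submodule.Quotient.mk_eq_zero S).mpr (hR a b v))

end Connection

namespace TwoTermRUTH

variable {R : Type*} [CommRing R] {A : Type*} [AddCommGroup A] [Module R A]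
  {L : LieAlgebroid R A}
  {W0 W1 : Type*} [AddCommGroup W0] [Module R W0] [AddCommGroup W1] [Module R W1]
  (W : TwoTermRUTH R L W0 W1) {V0 : Submodule R W0} {V1 : Submodule R W1}
  (hd : ∀ v ∈ V0, W.d v ∈ V1) (h0 : ∀ a, ∀ v ∈ V0, W.conn0.conn a v ∈ V0)
  (h1 : ∀ a, ∀ w ∈ V1, W.conn1.conn a w ∈ V1) (hK : ∀ a b, ∀ w ∈ V1, W.K a b w ∈ V0)

def restrict : TwoTermRUTH R L V0 V1 where
  d := W.d.restrict hd
  conn0 := W.conn0.restrict h0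
  conn1 := W.conn1.restrict h1
  d_conn a v := Subtype.ext (W.d_conn a v)
  K a b := (W.K a b).restrict (hK a b)
  K_add_left a b c := LinearMap.ext fun w => Subtype.ext (by simp [W.K_add_left])
  K_smul_left f a b := LinearMap.ext fun w => Subtype.ext (by simp [W.K_smul_left])
  K_skew a b := LinearMap.ext fun w => Subtype.ext (by simp [W.K_skew a b])
  curv0 a b v := Subtype.ext (by simpa using W.curv0 a b v)
  curv1 a b w := Subtype.ext (by simpa using W.curv1 a b w)
  dK a b c w := Subtype.ext (by simpa using W.dK a b c w)

def restrictInclusion : RUTHHomOver LinearMap.id (W.restrict hd h0 h1 hK) W where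
  φ0 := V0.subtype
  φ1 := V1.subtype
  Φ := 0
  comm_d v := rfl
  comm0 a v := sub_self _
  comm1 a w := (sub_self _).trans (map_zero W.d).symm
  commK a b w := by simp [restrict, W.conn0.conn_zero_right]

variable {W} in
theorem isSubrep_iff : IsSubrep W V0 V1 ↔
    (∀ v ∈ V0, W.d v ∈ V1) ∧ (∀ a, ∀ v ∈ V0, W.conn0.conn a v ∈ V0) ∧
      (∀ a, ∀ w ∈ V1, W.conn1.conn a w ∈ V1) ∧ (∀ a b, ∀ w ∈ V1, W.K a b w ∈ V0) := by
  constructor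
  · rintro ⟨P, F, hφ0, hφ1, hΦ⟩
    refine ⟨fun v hv => ?_, fun a v hv => ?_, fun a w hw => ?_, fun a b w hw => ?_⟩
    · have h := F.comm_d ⟨v, hv⟩
      simp only [hφ0, hφ1, Submodule.subtype_apply] at h
      exact h ▸ (P.d ⟨v, hv⟩).2
    · have h := F.comm0 a ⟨v, hv⟩
      simp only [hφ0, hΦ, LinearMap.id_apply, Submodule.subtype_apply, LinearMap.zero_apply,
        sub_eq_zero] at h
      exact h ▸ (P.conn0.conn a ⟨v, hv⟩).2
    · have h := F.comm1 a ⟨w, hw⟩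
      simp only [hφ1, hΦ, LinearMap.id_apply, Submodule.subtype_apply, LinearMap.zero_apply,
        map_zero, sub_eq_zero] at h
      exact h ▸ (P.conn1.conn a ⟨w, hw⟩).2
    · have h := F.commK a b ⟨w, hw⟩
      simp only [hφ0, hφ1, hΦ, LinearMap.id_apply, Submodule.subtype_apply, LinearMap.zero_apply,
        W.conn0.conn_zero_right, sub_self, eq_comm (a := (0 : W0)), sub_eq_zero] at h
      exact h ▸ (P.K a b ⟨w, hw⟩).2
  · rintro ⟨hd, h0, h1, hK⟩
    exact ⟨W.restrict hd h0 h1 hK, W.restrictInclusion hd h0 h1 hK, rfl, rfl, rfl⟩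

end TwoTermRUTH

theorem double_representation_subrep_iff_general
    {R : Type*} [CommRing R]
    {B : Type*} [AddCommGroup B] [Module R B]
    -- the tangent Lie algebroid `TM`
    (LT : LieAlgebroid R (Derivation ℤ R R))
    (hbracket : ∀ X Y, LT.bracket X Y = ⁅X, Y⁆)
    -- a `TM`-connection `∇` on `B`
    (D : Connection R LT B)
    -- the double representation `𝒟_∇(B)` of `TM` on `B[0] ⊕ B[1]`
    (Drep : TwoTermRUTH R LT B B)
    (h0 : ∀ X b, Drep.conn0.conn X b = D.conn X b)
    (hK : ∀ X Y b, Drep.K X Y b = - D.curv X Y b)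
    -- a vector subbundle `C ⊆ B`
    (C : Submodule R B) :
    IsSubrep Drep C (⊤ : Submodule R B) ↔
      ((∀ X, ∀ c ∈ C, D.conn X c ∈ C) ∧
       (∃ Dq : Derivation ℤ R R → B ⧸ C → B ⧸ C,
          (∀ X b, Dq X (Submodule.Quotient.mk b) = Submodule.Quotient.mk (D.conn X b)) ∧
          (∀ X Y q, Dq X (Dq Y q) - Dq Y (Dq X q) - Dq ⁅X, Y⁆ q = 0))) := by
  simp only [TwoTermRUTH.isSubrep_iff, h0, hK, ← hbracket, Submodule.mem_top, neg_mem_iff,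
    implies_true, forall_const, true_and]
  exact and_congr_right fun hC => (D.exists_flat_quotient_iff hC).symm

theorem double_representation_subrep_iff
    {R : Type*} [CommRing R]
    {B : Type*} [AddCommGroup B] [Module R B]
    -- the tangent Lie algebroid `TM`
    (LT : LieAlgebroid R (Derivation ℤ R R))
    (hanchor : ∀ X, LT.anchor X = X)
    (hbracket : ∀ X Y, LT.bracket X Y = ⁅X, Y⁆)
    -- a `TM`-connection `∇` on `B`
    (D : Connection R LT B)
    -- the double representation `𝒟_∇(B)` of `TM` on `B[0] ⊕ B[1]`
    (Drep : TwoTermRUTH R LT B B)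
    (hd : Drep.d = LinearMap.id)
    (h0 : ∀ X b, Drep.conn0.conn X b = D.conn X b)
    (h1 : ∀ X b, Drep.conn1.conn X b = D.conn X b)
    (hK : ∀ X Y b, Drep.K X Y b = - D.curv X Y b)
    -- a vector subbundle `C ⊆ B`
    (C : Submodule R B) :
    IsSubrep Drep C (⊤ : Submodule R B) ↔
      ((∀ X, ∀ c ∈ C, D.conn X c ∈ C) ∧
       (∃ Dq : Derivation ℤ R R → B ⧸ C → B ⧸ C,
          (∀ X b, Dq X (Submodule.Quotient.mk b) = Submodule.Quotient.mk (D.conn X b)) ∧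
          (∀ X Y q, Dq X (Dq Y q) - Dq Y (Dq X q) - Dq ⁅X, Y⁆ q = 0))) :=
  double_representation_subrep_iff_general LT hbracket D Drep h0 hK C
end
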